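/- arXiv:1207.1126 — 5 statements merged into one kernel-verified Lean document; each statement's English description precedes it below -/
import Mathlib

section
/- For every integer n ≥ 2, the Riemann zeta function satisfies ζ(n) = (2^n/(2^n - 1)) · Σ_{k=0}^∞ (1/2)_k^n / ((3/2)_k^n) · 1/k! , i.e. ζ(n) equals (2^n/(2^n-1)) times the generalized hypergeometric function _{n+1}F_n with numerator parameters (1, 1/2, ..., 1/2) and denominator parameters (3/2, ..., 3/2) at argument 1. -/
open scoped BigOperators

/-- Pochhammer symbol `(a)_k = Γ(a+k)/Γ(a)`. -/
noncomputable def poch (a : ℝ) (k : ℕ) : ℝ := Real.Gamma (a + k) / Real.Gamma a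

/-!
Since `(3/2)_k = (2k+1) (1/2)_k` and `(1)_k = k!`, the `k`-th hypergeometric term is
`1/(2k+1)^n`, so the series is the sum of `1/m^n` over odd `m`. Splitting `ζ(n)` into odd and
even `m` and factoring `2^{-n}` out of the even part shows that this sum is `(1 - 2^{-n}) ζ(n)`.
-/

lemma poch_one (k : ℕ) : poch 1 k = k.factorial := by
  rw [poch, Real.Gamma_one, div_one, add_comm, Real.Gamma_nat_eq_factorial]

lemma poch_pos {a : ℝ} (ha : 0 < a) (k : ℕ) : 0 < poch a k :=
  div_pos (Real.Gamma_pos_of_pos (by positivity)) (Real.Gamma_pos_of_pos ha)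

lemma mul_poch_add_one {a : ℝ} (ha : 0 < a) (k : ℕ) :
    a * poch (a + 1) k = (a + k) * poch a k := by
  have hΓ : Real.Gamma a ≠ 0 := (Real.Gamma_pos_of_pos ha).ne'
  rw [poch, poch, add_right_comm, Real.Gamma_add_one (by positivity), Real.Gamma_add_one ha.ne']
  field_simp

lemma poch_half_div_poch_three_halves (k : ℕ) :
    poch (1 / 2) k / poch (3 / 2) k = 1 / (2 * k + 1) := by
  have h := mul_poch_add_one (a := 1 / 2) (by norm_num) k
  have hpos := poch_pos (a := 3 / 2) (by norm_num) k
  norm_num at h ⊢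
  field_simp
  linarith

lemma summable_one_div_nat_add_one_pow {n : ℕ} (hn : 1 < n) :
    Summable fun m : ℕ => 1 / ((m : ℝ) + 1) ^ n := by
  exact_mod_cast (summable_nat_add_iff 1).mpr (Real.summable_one_div_nat_pow.mpr hn)

lemma tsum_one_div_two_mul_add_one_pow {n : ℕ} (hn : 1 < n) :
    ∑' k : ℕ, 1 / (2 * (k : ℝ) + 1) ^ n = (1 - 1 / 2 ^ n) * ∑' m : ℕ, 1 / ((m : ℝ) + 1) ^ n := by
  set f : ℕ → ℝ := fun m => 1 / ((m : ℝ) + 1) ^ n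
  have hf : Summable f := summable_one_div_nat_add_one_pow hn
  have heven : (fun k => f (2 * k)) = fun k : ℕ => 1 / (2 * (k : ℝ) + 1) ^ n := by
    ext k
    simp [f]
  have hodd : (fun k => f (2 * k + 1)) = fun k => 1 / 2 ^ n * f k := by
    ext k
    simp only [f]
    rw [show ((2 * k + 1 : ℕ) : ℝ) + 1 = 2 * ((k : ℝ) + 1) by push_cast; ring, mul_pow,
      one_div_mul_one_div]
  have hsplit := tsum_even_add_odd (hf.comp_injective fun a b h => by omega)
    (hf.comp_injective fun a b h => by omega)
  rw [heven, hodd, tsum_mul_left] at hsplit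
  linear_combination hsplit

/-- For every integer `n ≥ 2`, `ζ(n) = (2^n/(2^n-1)) · ₙ₊₁Fₙ(1, 1/2,...,1/2; 3/2,...,3/2; 1)`. -/
theorem zeta_eq_hypergeometric_half (n : ℕ) (hn : 2 ≤ n) :
    (∑' m : ℕ, 1 / ((m : ℝ) + 1) ^ n) =
      ((2 : ℝ) ^ n / (2 ^ n - 1)) *
        ∑' k : ℕ, (poch 1 k * poch (1 / 2) k ^ n) /
          (poch (3 / 2) k ^ n * (Nat.factorial k : ℝ)) := by
  have hterm (k : ℕ) : (poch 1 k * poch (1 / 2) k ^ n) /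
      (poch (3 / 2) k ^ n * (Nat.factorial k : ℝ)) = 1 / (2 * (k : ℝ) + 1) ^ n := by
    rw [poch_one, mul_comm (poch (3 / 2) k ^ n), mul_div_mul_comm,
      div_self (by positivity), ← div_pow, poch_half_div_poch_three_halves, one_div_pow, one_mul]
  have h2n : (2 : ℝ) ^ n - 1 ≠ 0 := (sub_pos.2 (one_lt_pow₀ (by norm_num) (by omega))).ne'
  simp_rw [hterm, tsum_one_div_two_mul_add_one_pow (n := n) (by omega), ← mul_assoc]
  field_simp
end

section
/- Define the harmonic sawtooth map w(x) = ⌊1/x⌋ (x⌊1/x⌋ + x - 1) for x ∈ (0,1). Then for all real s > 1, ζ(s) = s(s+1)/(s-1) · ∫_0^1 w(x) x^{s-1} dx. -/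
/-!
On `(1/(n+2), 1/(n+1)]` the floor `⌊1/x⌋` equals `n+1`, so there `w(x) x^(s-1)` is a combination
of two powers of `x` and its integral is elementary. These intervals tile `(0, 1]`, and summing the
piece integrals over `n`, the terms in `(n+1)^(1-s)` telescope while the rest add up to
`(s-1) ζ(s) / (s(s+1))`.
-/

open MeasureTheory Set Filter Topology Function

noncomputable def harmonicSawtooth (x : ℝ) : ℝ :=
  ⌊1 / x⌋ * (x * ⌊1 / x⌋ + x - 1)

def reciprocalInterval (n : ℕ) : Set ℝ :=
  Ioc (1 / ((n : ℝ) + 2)) (1 / ((n : ℝ) + 1))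

theorem mem_reciprocalInterval_iff {x : ℝ} {n : ℕ} :
    x ∈ reciprocalInterval n ↔ ⌊1 / x⌋ = n + 1 := by
  rcases le_or_gt x 0 with hx | hx
  · have hfloor : ⌊1 / x⌋ ≤ 0 :=
      Int.floor_nonpos (div_nonpos_of_nonneg_of_nonpos zero_le_one hx)
    have hmem : x ∉ reciprocalInterval n := fun h =>
      (((by positivity : (0 : ℝ) < 1 / ((n : ℝ) + 2)).trans h.1).trans_le hx).false
    simp only [hmem, false_iff]
    omega
  · rw [reciprocalInterval, mem_Ioc, Int.floor_eq_iff, one_div_lt (by positivity) hx,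
      le_one_div hx (by positivity)]
    push_cast
    constructor <;> rintro ⟨h₁, h₂⟩ <;> constructor <;> linarith

theorem pairwise_disjoint_reciprocalInterval : Pairwise (Disjoint on reciprocalInterval) := by
  intro i j hij
  refine disjoint_left.2 fun x hi hj => hij ?_
  rw [mem_reciprocalInterval_iff] at hi hj
  omega

theorem iUnion_reciprocalInterval : ⋃ n, reciprocalInterval n = Ioc 0 1 := by
  ext x
  simp only [mem_iUnion, mem_reciprocalInterval_iff, mem_Ioc]
  constructor
  · rintro ⟨n, hn⟩
    have h : (1 : ℝ) ≤ 1 / x := by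
      exact_mod_cast Int.le_floor.1 (by omega : (1 : ℤ) ≤ ⌊1 / x⌋)
    have hx : 0 < x := one_div_pos.1 (by linarith)
    exact ⟨hx, by rwa [le_div_iff₀ hx, one_mul] at h⟩
  · rintro ⟨hx₀, hx₁⟩
    have h : 1 ≤ ⌊1 / x⌋ := Int.le_floor.2 (by push_cast; rw [le_div_iff₀ hx₀]; linarith)
    obtain ⟨n, hn⟩ := Int.eq_ofNat_of_zero_le (by omega : 0 ≤ ⌊1 / x⌋ - 1)
    exact ⟨n, by omega⟩

theorem integral_Ioc_zero_one_eq_tsum {E : Type*} [NormedAddCommGroup E] [NormedSpace ℝ E]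
    {f : ℝ → E} (hf : IntegrableOn f (Ioc 0 1)) :
    ∫ x in Ioc 0 1, f x = ∑' n, ∫ x in reciprocalInterval n, f x := by
  rw [← iUnion_reciprocalInterval] at hf ⊢
  exact integral_iUnion (fun _ => measurableSet_Ioc) pairwise_disjoint_reciprocalInterval hf

theorem harmonicSawtooth_mem_Icc {x : ℝ} (hx : 0 < x) : harmonicSawtooth x ∈ Icc 0 1 := by
  have hle : (⌊1 / x⌋ : ℝ) * x ≤ 1 := (le_div_iff₀ hx).1 (Int.floor_le _)
  have hlt : 1 < ((⌊1 / x⌋ : ℝ) + 1) * x := (div_lt_iff₀ hx).1 (Int.lt_floor_add_one _)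
  have hnonneg : (0 : ℝ) ≤ ⌊1 / x⌋ := by exact_mod_cast Int.floor_nonneg.2 (by positivity)
  constructor <;> simp only [harmonicSawtooth] <;> nlinarith

theorem measurable_harmonicSawtooth : Measurable harmonicSawtooth := by
  have hfloor : Measurable fun x : ℝ => (⌊1 / x⌋ : ℝ) :=
    measurable_from_top.comp (measurable_const.div measurable_id).floor
  unfold harmonicSawtooth
  fun_prop

theorem integrableOn_harmonicSawtooth_mul_rpow {s : ℝ} (hs : 0 < s) :
    IntegrableOn (fun x => harmonicSawtooth x * x ^ (s - 1)) (Ioc 0 1) := by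
  have hrpow : IntegrableOn (fun x : ℝ => x ^ (s - 1)) (Ioc 0 1) :=
    (intervalIntegral.intervalIntegrable_rpow' (by linarith)).1
  refine hrpow.bdd_mul (c := 1) measurable_harmonicSawtooth.aestronglyMeasurable ?_
  refine ae_restrict_of_forall_mem measurableSet_Ioc fun x hx => ?_
  obtain ⟨h₀, h₁⟩ := harmonicSawtooth_mem_Icc hx.1
  rwa [Real.norm_of_nonneg h₀]

theorem integral_rpow_one_div {a b r : ℝ} (ha : 0 < a) (hb : 0 < b) (hr : r ≠ -1) :
    ∫ x in (1 / b)..(1 / a), x ^ r = (a ^ (-(r + 1)) - b ^ (-(r + 1))) / (r + 1) := by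
  rw [integral_rpow (Or.inr ⟨hr, notMem_uIcc_of_lt (by positivity) (by positivity)⟩),
    one_div, one_div, Real.inv_rpow ha.le, Real.inv_rpow hb.le, ← Real.rpow_neg ha.le,
    ← Real.rpow_neg hb.le]

theorem setIntegral_reciprocalInterval_harmonicSawtooth_mul_rpow {s : ℝ} (hs₀ : s ≠ 0)
    (hs₁ : s + 1 ≠ 0) (n : ℕ) :
    ∫ x in reciprocalInterval n, harmonicSawtooth x * x ^ (s - 1) =
      (s * ((n : ℝ) + 1) ^ (-s) - ((n : ℝ) + 1) ^ (1 - s) +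
        ((n : ℝ) + 1) * ((n : ℝ) + 2) ^ (-s)) / (s * (s + 1)) := by
  set m : ℝ := (n : ℝ) + 1
  have hm₀ : 0 < m := by positivity
  have hm₁ : (n : ℝ) + 2 = m + 1 := by ring
  have hpoly : EqOn (fun x => harmonicSawtooth x * x ^ (s - 1))
      (fun x => m * (m + 1) * x ^ s - m * x ^ (s - 1)) (reciprocalInterval n) := by
    intro x hx
    have hfloor : (⌊1 / x⌋ : ℝ) = m := by
      rw [mem_reciprocalInterval_iff.1 hx]; push_cast; rfl
    have hx₀ : 0 < x := (by positivity : (0 : ℝ) < 1 / ((n : ℝ) + 2)).trans hx.1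
    simp only [harmonicSawtooth, hfloor]
    rw [show x ^ s = x ^ (s - 1) * x by rw [← Real.rpow_add_one hx₀.ne']; ring_nf]
    ring
  have hle : 1 / (m + 1) ≤ 1 / m := one_div_le_one_div_of_le hm₀ (by linarith)
  have hmeas : MeasurableSet (reciprocalInterval n) := measurableSet_Ioc
  have hint (r : ℝ) : IntervalIntegrable (fun x : ℝ => x ^ r) volume (1 / (m + 1)) (1 / m) :=
    intervalIntegral.intervalIntegrable_rpow
      (Or.inr (notMem_uIcc_of_lt (by positivity) (by positivity)))
  rw [setIntegral_congr_fun hmeas hpoly, reciprocalInterval, hm₁,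
    ← intervalIntegral.integral_of_le hle,
    intervalIntegral.integral_sub ((hint s).const_mul _) ((hint (s - 1)).const_mul _),
    intervalIntegral.integral_const_mul, intervalIntegral.integral_const_mul,
    integral_rpow_one_div hm₀ (by positivity) (by contrapose! hs₁; linarith),
    integral_rpow_one_div hm₀ (by positivity) (by contrapose! hs₀; linarith), sub_add_cancel]
  have hpow_succ (y : ℝ) (hy : 0 < y) : y ^ (-(s + 1)) = y ^ (-s) / y := by
    rw [neg_add, ← sub_eq_add_neg, Real.rpow_sub_one hy.ne']
  have hpow_one_sub : m ^ (1 - s) = m ^ (-s) * m := by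
    rw [sub_eq_neg_add, Real.rpow_add_one hm₀.ne']
  rw [hpow_succ m hm₀, hpow_succ (m + 1) (by positivity), hpow_one_sub]
  field_simp
  ring

theorem Antitone.hasSum_sub_succ {f : ℕ → ℝ} {l : ℝ} (hf : Antitone f)
    (hl : Tendsto f atTop (𝓝 l)) : HasSum (fun n => f n - f (n + 1)) (f 0 - l) := by
  refine (hasSum_iff_tendsto_nat_of_nonneg (fun n => sub_nonneg.2 (hf n.le_succ)) _).2 ?_
  simp_rw [Finset.sum_range_sub']
  exact tendsto_const_nhds.sub hl

theorem hasSum_harmonicSawtooth_pieces {s : ℝ} (hs : 1 < s) :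
    HasSum (fun n : ℕ => s * ((n : ℝ) + 1) ^ (-s) - ((n : ℝ) + 1) ^ (1 - s) +
        ((n : ℝ) + 1) * ((n : ℝ) + 2) ^ (-s))
      ((s - 1) * ∑' n : ℕ, ((n : ℝ) + 1) ^ (-s)) := by
  set ζ := ∑' n : ℕ, ((n : ℝ) + 1) ^ (-s)
  have hsum : HasSum (fun n : ℕ => ((n : ℝ) + 1) ^ (-s)) ζ := Summable.hasSum <| by
    exact_mod_cast (summable_nat_add_iff 1).2 (Real.summable_nat_rpow.2 (by linarith))
  have hshift : HasSum (fun n : ℕ => ((n : ℝ) + 2) ^ (-s)) (ζ - 1) := by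
    have := (hasSum_nat_add_iff' 1).2 hsum
    push_cast at this
    simpa [add_assoc, one_add_one_eq_two] using this
  have hanti : Antitone fun n : ℕ => ((n : ℝ) + 1) ^ (1 - s) := fun i j hij =>
    Real.rpow_le_rpow_of_nonpos (by positivity) (by gcongr) (by linarith)
  have hlim : Tendsto (fun n : ℕ => ((n : ℝ) + 1) ^ (1 - s)) atTop (𝓝 0) := by
    rw [show 1 - s = -(s - 1) by ring]
    exact (tendsto_rpow_neg_atTop (by linarith)).comp
      (tendsto_atTop_add_const_right _ 1 tendsto_natCast_atTop_atTop)
  have htele : HasSum (fun n : ℕ => ((n : ℝ) + 1) ^ (1 - s) - ((n : ℝ) + 2) ^ (1 - s)) 1 := by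
    have := hanti.hasSum_sub_succ hlim
    push_cast at this
    simpa [add_assoc, one_add_one_eq_two] using this
  -- `(n+1) (n+2)^(-s) = (n+2)^(1-s) - (n+2)^(-s)` splits the summand into three known series.
  have h := ((hsum.mul_left s).sub htele).sub hshift
  rw [show s * ζ - 1 - (ζ - 1) = (s - 1) * ζ by ring] at h
  refine h.congr_fun fun n => ?_
  rw [sub_eq_neg_add 1 s, Real.rpow_add_one (x := (n : ℝ) + 2) (by positivity) (-s)]
  ring

/-- The harmonic sawtooth map `w(x) = ⌊1/x⌋(x⌊1/x⌋ + x - 1)` satisfies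
`ζ(s) = s(s+1)/(s-1) ∫_0^1 w(x) x^{s-1} dx` for real `s > 1`. -/
theorem zeta_eq_harmonic_sawtooth_mellin (s : ℝ) (hs : 1 < s) :
    (∑' n : ℕ, ((n : ℝ) + 1) ^ (-s)) =
      s * (s + 1) / (s - 1) *
        ∫ x in Set.Ioo (0 : ℝ) 1,
          (⌊1 / x⌋ : ℝ) * (x * (⌊1 / x⌋ : ℝ) + x - 1) * x ^ (s - 1) := by
  have hint : ∫ x in Ioo 0 1, harmonicSawtooth x * x ^ (s - 1) =
      (s - 1) * (∑' n : ℕ, ((n : ℝ) + 1) ^ (-s)) / (s * (s + 1)) := by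
    rw [← integral_Ioc_eq_integral_Ioo,
      integral_Ioc_zero_one_eq_tsum (integrableOn_harmonicSawtooth_mul_rpow (by linarith)),
      tsum_congr (setIntegral_reciprocalInterval_harmonicSawtooth_mul_rpow (by linarith)
        (by linarith)), tsum_div_const, (hasSum_harmonicSawtooth_pieces hs).tsum_eq]
  change _ = _ * ∫ x in Ioo 0 1, harmonicSawtooth x * x ^ (s - 1)
  rw [hint]
  field_simp [(by linarith : s - 1 ≠ 0)]
end

section
/- For each positive integer n, ∫_{1/(n+1)}^{1/n} n(xn + x - 1) dx = 1/(2n(n+1)), and hence ∫_0^1 ⌊1/x⌋(x⌊1/x⌋ + x - 1) dx = Σ_{n=1}^∞ 1/(2n(n+1)) = 1/2. -/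
/-!
On `(1/(n+2), 1/(n+1)]` the floor `⌊1/x⌋` equals `n + 1`, so there the integrand is a quadratic
polynomial with integral `1/(2(n+1)(n+2)) = g n - g (n+1)`, where `g n = 1/(2(n+1))`. These
intervals partition `(0, 1]` and the integrand is bounded by `1` on it, so countable additivity
turns the integral into a telescoping series with sum `g 0 = 1/2`.
-/

open MeasureTheory Set Filter Topology Function

theorem integral_Ioo_one_div_add_one_one_div {t : ℝ} (ht : 0 < t) :
    (∫ x in Ioo (1 / (t + 1)) (1 / t), t * (x * t + x - 1)) = 1 / (2 * t * (t + 1)) := by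
  have hle : 1 / (t + 1) ≤ 1 / t := one_div_le_one_div_of_le ht (by linarith)
  have hderiv : ∀ x ∈ uIcc (1 / (t + 1)) (1 / t),
      HasDerivAt (fun x ↦ t * ((t + 1) * x ^ 2 / 2 - x)) (t * (x * t + x - 1)) x := by
    intro x _
    refine ((((hasDerivAt_pow 2 x).const_mul (t + 1)).div_const 2).sub
      (hasDerivAt_id x)).const_mul t |>.congr_deriv ?_
    simp only [Nat.cast_ofNat, Nat.add_one_sub_one, pow_one]
    ring
  have hint : IntervalIntegrable (fun x ↦ t * (x * t + x - 1)) volume (1 / (t + 1)) (1 / t) :=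
    (by fun_prop : Continuous _).intervalIntegrable _ _
  rw [← integral_Ioc_eq_integral_Ioo, ← intervalIntegral.integral_of_le hle,
    intervalIntegral.integral_eq_sub_of_hasDerivAt hderiv hint]
  field_simp
  ring

theorem hasSum_sub_succ_of_antitone {f : ℕ → ℝ} {l : ℝ} (hf : Antitone f)
    (h : Tendsto f atTop (𝓝 l)) : HasSum (fun n ↦ f n - f (n + 1)) (f 0 - l) := by
  rw [hasSum_iff_tendsto_nat_of_nonneg fun n ↦ sub_nonneg.2 (hf n.le_succ)]
  simp only [Finset.sum_range_sub']
  exact tendsto_const_nhds.sub h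

theorem floor_one_div_eq_natCast_add_one_iff {x : ℝ} (hx : 0 < x) (n : ℕ) :
    ⌊1 / x⌋ = (n : ℤ) + 1 ↔ x ∈ Ioc (1 / ((n : ℝ) + 2)) (1 / ((n : ℝ) + 1)) := by
  rw [Int.floor_eq_iff, mem_Ioc, and_comm]
  push_cast
  rw [le_one_div (by positivity) hx, one_div_lt hx (by positivity), add_assoc, one_add_one_eq_two]

theorem one_le_floor_one_div_iff {x : ℝ} (hx : 0 < x) : 1 ≤ ⌊1 / x⌋ ↔ x ≤ 1 := by
  rw [Int.le_floor, Int.cast_one, le_one_div one_pos hx, div_one]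

theorem iUnion_Ioc_one_div_add_two_one_div_add_one :
    ⋃ n : ℕ, Ioc (1 / ((n : ℝ) + 2)) (1 / ((n : ℝ) + 1)) = Ioc 0 1 := by
  ext x
  simp only [mem_iUnion]
  constructor
  · rintro ⟨n, hn⟩
    have hx : 0 < x := lt_trans (by positivity) hn.1
    have hfloor := (floor_one_div_eq_natCast_add_one_iff hx n).2 hn
    exact ⟨hx, (one_le_floor_one_div_iff hx).1 (by omega)⟩
  · rintro ⟨hx, hx1⟩
    have hfloor := (one_le_floor_one_div_iff hx).2 hx1
    exact ⟨(⌊1 / x⌋ - 1).toNat, (floor_one_div_eq_natCast_add_one_iff hx _).1 (by omega)⟩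

theorem pairwise_disjoint_Ioc_one_div_add_two_one_div_add_one :
    Pairwise (Disjoint on fun n : ℕ ↦ Ioc (1 / ((n : ℝ) + 2)) (1 / ((n : ℝ) + 1))) := by
  intro m n hmn
  refine disjoint_left.2 fun x hm hn ↦ hmn ?_
  have hx : 0 < x := lt_trans (by positivity) hm.1
  have hfloor := ((floor_one_div_eq_natCast_add_one_iff hx m).2 hm).symm.trans
    ((floor_one_div_eq_natCast_add_one_iff hx n).2 hn)
  omega

theorem harmonicSawtooth_eqOn (n : ℕ) :
    EqOn harmonicSawtooth (fun x ↦ ((n : ℝ) + 1) * (x * ((n : ℝ) + 1) + x - 1))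
      (Ioc (1 / ((n : ℝ) + 2)) (1 / ((n : ℝ) + 1))) := by
  intro x hx
  have hx0 : 0 < x := lt_trans (by positivity) hx.1
  rw [harmonicSawtooth, (floor_one_div_eq_natCast_add_one_iff hx0 n).2 hx]
  push_cast
  rfl

theorem abs_harmonicSawtooth_le_one {x : ℝ} (hx : x ∈ Ioc 0 1) :
    |harmonicSawtooth x| ≤ 1 := by
  obtain ⟨hx0, hx1⟩ := hx
  have hm : (1 : ℝ) ≤ ⌊1 / x⌋ := by exact_mod_cast (one_le_floor_one_div_iff hx0).2 hx1
  have hlo : (⌊1 / x⌋ : ℝ) * x ≤ 1 := (le_div_iff₀ hx0).1 (Int.floor_le _)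
  have hhi : 1 < ((⌊1 / x⌋ : ℝ) + 1) * x := (div_lt_iff₀ hx0).1 (Int.lt_floor_add_one _)
  -- with `m = ⌊1/x⌋`: `0 ≤ m ((m+1) x - 1) ≤ m x ≤ 1`
  rw [harmonicSawtooth, abs_le]
  constructor <;> nlinarith

theorem integrableOn_harmonicSawtooth : IntegrableOn harmonicSawtooth (Ioc 0 1) :=
  Measure.integrableOn_of_bounded (M := 1) (by simp [Real.volume_Ioc])
    (by unfold harmonicSawtooth; fun_prop : Measurable harmonicSawtooth).aestronglyMeasurable
    ((ae_restrict_iff' measurableSet_Ioc).2 (ae_of_all _ fun _ ↦ abs_harmonicSawtooth_le_one))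

theorem integral_Ioc_harmonicSawtooth (n : ℕ) :
    ∫ x in Ioc (1 / ((n : ℝ) + 2)) (1 / ((n : ℝ) + 1)), harmonicSawtooth x =
      1 / (2 * ((n : ℝ) + 1) * ((n : ℝ) + 2)) := by
  rw [setIntegral_congr_fun measurableSet_Ioc (harmonicSawtooth_eqOn n),
    integral_Ioc_eq_integral_Ioo]
  have h := integral_Ioo_one_div_add_one_one_div (t := (n : ℝ) + 1) (by positivity)
  rwa [show (n : ℝ) + 1 + 1 = n + 2 by ring] at h

theorem integral_Ioo_zero_one_harmonicSawtooth :
    ∫ x in Ioo 0 1, harmonicSawtooth x =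
      ∑' n : ℕ, 1 / (2 * ((n : ℝ) + 1) * ((n : ℝ) + 2)) := by
  rw [← integral_Ioc_eq_integral_Ioo, ← iUnion_Ioc_one_div_add_two_one_div_add_one,
    integral_iUnion (fun _ ↦ measurableSet_Ioc)
      pairwise_disjoint_Ioc_one_div_add_two_one_div_add_one
      (iUnion_Ioc_one_div_add_two_one_div_add_one ▸ integrableOn_harmonicSawtooth)]
  exact tsum_congr integral_Ioc_harmonicSawtooth

theorem tsum_one_div_two_mul_add_one_mul_add_two :
    ∑' n : ℕ, 1 / (2 * ((n : ℝ) + 1) * ((n : ℝ) + 2)) = 1 / 2 := by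
  set g : ℕ → ℝ := fun n ↦ 1 / (2 * ((n : ℝ) + 1))
  have hterm : ∀ n : ℕ, 1 / (2 * ((n : ℝ) + 1) * ((n : ℝ) + 2)) = g n - g (n + 1) := by
    intro n
    simp only [g]
    push_cast
    field_simp
    ring
  have hg : Antitone g := fun m n hmn ↦
    one_div_le_one_div_of_le (by positivity) (by gcongr)
  have hlim : Tendsto g atTop (𝓝 0) :=
    tendsto_const_nhds.div_atTop
      ((tendsto_natCast_atTop_atTop.atTop_add tendsto_const_nhds).const_mul_atTop two_pos)
  simp_rw [hterm]
  simpa [g] using (hasSum_sub_succ_of_antitone hg hlim).tsum_eq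

/-- `∫_{1/(n+1)}^{1/n} n(xn+x-1) dx = 1/(2n(n+1))`, and hence
`∫_0^1 ⌊1/x⌋(x⌊1/x⌋+x-1) dx = Σ_{n=1}^∞ 1/(2n(n+1)) = 1/2`. -/
theorem harmonic_sawtooth_length :
    (∀ n : ℕ, 0 < n →
      (∫ x in Set.Ioo (1 / ((n : ℝ) + 1)) (1 / (n : ℝ)),
          (n : ℝ) * (x * (n : ℝ) + x - 1)) = 1 / (2 * (n : ℝ) * ((n : ℝ) + 1))) ∧
    (∫ x in Set.Ioo (0 : ℝ) 1, (⌊1 / x⌋ : ℝ) * (x * (⌊1 / x⌋ : ℝ) + x - 1)) =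
      ∑' n : ℕ, 1 / (2 * ((n : ℝ) + 1) * ((n : ℝ) + 2)) ∧
    (∑' n : ℕ, 1 / (2 * ((n : ℝ) + 1) * ((n : ℝ) + 2))) = 1 / 2 :=
  ⟨fun _ hn ↦ integral_Ioo_one_div_add_one_one_div (Nat.cast_pos.2 hn),
    integral_Ioo_zero_one_harmonicSawtooth, tsum_one_div_two_mul_add_one_mul_add_two⟩
end

section
/- For each positive integer n, ∫_{1/(n+1)}^{1/n} (1/x - ⌊1/x⌋) dx = ( (n+1)(ln(n+1) - ln n) - 1 )/(n+1); and the total ∫_0^1 (1/x - ⌊1/x⌋) dx = 1 - γ, where γ is the Euler–Mascheroni constant. -/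
open scoped BigOperators

open MeasureTheory

lemma gauss_floor_eq {n : ℕ} (hn : 0 < n) {x : ℝ}
    (hx : x ∈ Set.Ioo (1 / ((n : ℝ) + 1)) (1 / (n : ℝ))) : ⌊1 / x⌋ = (n : ℤ) := by
  have hn' : (0 : ℝ) < n := by exact_mod_cast hn
  obtain ⟨h1, h2⟩ := hx
  have hx0 : 0 < x := lt_trans (by positivity) h1
  have hlb : (n : ℝ) < 1 / x := by
    rw [lt_div_iff₀ hx0]
    rw [lt_div_iff₀ hn'] at h2
    nlinarith
  have hub : 1 / x < (n : ℝ) + 1 := by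
    rw [div_lt_iff₀ hx0]
    rw [div_lt_iff₀ (by positivity : (0:ℝ) < (n:ℝ) + 1)] at h1
    nlinarith
  rw [Int.floor_eq_iff]
  constructor
  · push_cast; linarith
  · push_cast; linarith

lemma gauss_piece (n : ℕ) (hn : 0 < n) :
    (∫ x in Set.Ioo (1 / ((n : ℝ) + 1)) (1 / (n : ℝ)), (1 / x - (⌊1 / x⌋ : ℝ))) =
      Real.log ((n : ℝ) + 1) - Real.log (n : ℝ) - 1 / ((n : ℝ) + 1) := by
  have hn' : (0 : ℝ) < n := by exact_mod_cast hn
  set a : ℝ := 1 / ((n : ℝ) + 1) with ha_def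
  set b : ℝ := 1 / (n : ℝ) with hb_def
  have ha : 0 < a := by positivity
  have hb : 0 < b := by positivity
  have hab : a < b := by
    apply one_div_lt_one_div_of_lt hn'
    linarith
  have hcongr : ∫ x in Set.Ioo a b, (1 / x - (⌊1 / x⌋ : ℝ)) =
      ∫ x in Set.Ioo a b, (1 / x - (n : ℝ)) := by
    apply setIntegral_congr_fun measurableSet_Ioo
    intro x hx
    simp only
    rw [gauss_floor_eq hn hx]
    push_cast
    ring
  rw [hcongr]
  have hioo : (∫ x in Set.Ioo a b, (1 / x - (n : ℝ))) = ∫ x in a..b, (1 / x - (n : ℝ)) := by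
    rw [intervalIntegral.integral_of_le hab.le, integral_Ioc_eq_integral_Ioo]
  rw [hioo]
  have h0 : (0 : ℝ) ∉ Set.uIcc a b := by
    rw [Set.uIcc_of_le hab.le]
    intro ⟨h, _⟩
    linarith
  have hint1 : IntervalIntegrable (fun x => 1 / x) volume a b := by
    apply ContinuousOn.intervalIntegrable
    apply ContinuousOn.div continuousOn_const continuousOn_id
    intro x hx
    exact fun h => h0 (h ▸ hx)
  have hint2 : IntervalIntegrable (fun _ : ℝ => (n : ℝ)) volume a b :=
    intervalIntegrable_const
  rw [intervalIntegral.integral_sub hint1 hint2, integral_one_div h0,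
    intervalIntegral.integral_const]
  have hba : b / a = ((n : ℝ) + 1) / n := by
    rw [ha_def, hb_def]
    field_simp
  rw [hba, Real.log_div (by positivity) (by positivity)]
  have hba2 : (b - a) • (n : ℝ) = 1 / ((n : ℝ) + 1) := by
    rw [smul_eq_mul, ha_def, hb_def]
    field_simp
    ring
  rw [hba2]

lemma gauss_Ioc_union :
    Set.Ioc (0 : ℝ) 1 = ⋃ n : ℕ, Set.Ioc (1 / ((n : ℝ) + 2)) (1 / ((n : ℝ) + 1)) := by
  ext x
  simp only [Set.mem_iUnion, Set.mem_Ioc]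
  constructor
  · rintro ⟨hx0, hx1⟩
    have h1x : 1 ≤ 1 / x := (le_div_iff₀ hx0).mpr (by linarith)
    set m := ⌊1 / x⌋ with hm_def
    have hm1 : 1 ≤ m := by
      rw [hm_def]
      exact_mod_cast Int.le_floor.mpr (by exact_mod_cast h1x)
    have hcast : (((m - 1).toNat : ℕ) : ℝ) = (m : ℝ) - 1 := by
      have h := Int.toNat_of_nonneg (show (0:ℤ) ≤ m - 1 by omega)
      exact_mod_cast h
    have hm0 : (0 : ℝ) < (m : ℝ) := by
      have : (1 : ℝ) ≤ m := by exact_mod_cast hm1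
      linarith
    refine ⟨(m - 1).toNat, ?_, ?_⟩
    · rw [hcast, show (m : ℝ) - 1 + 2 = (m : ℝ) + 1 by ring]
      have h1 : 1 / x < (m : ℝ) + 1 := by
        have := Int.lt_floor_add_one (1 / x)
        rw [← hm_def] at this
        exact_mod_cast this
      rw [div_lt_iff₀ (by linarith : (0:ℝ) < (m:ℝ) + 1)]
      rw [div_lt_iff₀ hx0] at h1
      nlinarith
    · rw [hcast, show (m : ℝ) - 1 + 1 = (m : ℝ) by ring]
      have hmle : (m : ℝ) ≤ 1 / x := by
        rw [hm_def]; exact Int.floor_le _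
      rw [le_div_iff₀ hm0]
      rw [le_div_iff₀ hx0] at hmle
      nlinarith
  · rintro ⟨n, h1, h2⟩
    have h0 : (0 : ℝ) < 1 / ((n : ℝ) + 2) := by positivity
    refine ⟨lt_trans h0 h1, ?_⟩
    calc x ≤ 1 / ((n : ℝ) + 1) := h2
      _ ≤ 1 := by
          rw [div_le_one (by positivity)]
          have : (0 : ℝ) ≤ n := Nat.cast_nonneg n
          linarith

lemma gauss_integrable : IntegrableOn (fun x : ℝ => 1 / x - (⌊1 / x⌋ : ℝ))
    (Set.Ioc (0 : ℝ) 1) := by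
  have hmeas : Measurable fun x : ℝ => 1 / x - (⌊1 / x⌋ : ℝ) := by
    have h1 : Measurable fun x : ℝ => 1 / x := measurable_const.div measurable_id
    exact h1.sub (measurable_from_top.comp h1.floor : Measurable fun x : ℝ => ((⌊1 / x⌋ : ℤ) : ℝ))
  apply Integrable.mono' (g := fun _ : ℝ => (1 : ℝ))
  · exact integrable_const _
  · exact hmeas.aestronglyMeasurable
  · filter_upwards with x
    have hle := Int.floor_le (1 / x)
    have hlt := Int.lt_floor_add_one (1 / x)
    rw [Real.norm_eq_abs, abs_le]
    constructor <;> linarith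

/-- `∫_{1/(n+1)}^{1/n} (1/x - ⌊1/x⌋) dx = ((n+1)(ln(n+1) - ln n) - 1)/(n+1)`, and
`∫_0^1 (1/x - ⌊1/x⌋) dx = 1 - γ`. -/
theorem gauss_map_piece_lengths :
    (∀ n : ℕ, 0 < n →
      (∫ x in Set.Ioo (1 / ((n : ℝ) + 1)) (1 / (n : ℝ)),
          (1 / x - (⌊1 / x⌋ : ℝ))) =
        (((n : ℝ) + 1) * (Real.log ((n : ℝ) + 1) - Real.log (n : ℝ)) - 1) /
          ((n : ℝ) + 1)) ∧
    (∫ x in Set.Ioo (0 : ℝ) 1, (1 / x - (⌊1 / x⌋ : ℝ))) =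
      1 - Real.eulerMascheroniConstant := by
  constructor
  · intro n hn
    rw [gauss_piece n hn]
    have hne : ((n : ℝ) + 1) ≠ 0 := by positivity
    field_simp
  · -- second part
    have hfi : IntegrableOn (fun x : ℝ => 1 / x - (⌊1 / x⌋ : ℝ))
        (⋃ n : ℕ, Set.Ioc (1 / ((n : ℝ) + 2)) (1 / ((n : ℝ) + 1))) := by
      rw [← gauss_Ioc_union]; exact gauss_integrable
    have hd : Pairwise (Function.onFun Disjoint fun n : ℕ =>
        Set.Ioc (1 / ((n : ℝ) + 2)) (1 / ((n : ℝ) + 1))) := by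
      intro m n hmn
      simp only [Function.onFun]
      rw [Set.Ioc_disjoint_Ioc]
      rcases hmn.lt_or_gt with h | h
      · apply le_trans (min_le_right _ _) (le_trans _ (le_max_left _ _))
        apply one_div_le_one_div_of_le (by positivity)
        have : (m : ℝ) + 1 ≤ n := by exact_mod_cast h
        linarith
      · apply le_trans (min_le_left _ _) (le_trans _ (le_max_right _ _))
        apply one_div_le_one_div_of_le (by positivity)
        have : (n : ℝ) + 1 ≤ m := by exact_mod_cast h
        linarith
    have hsum := hasSum_integral_iUnion (μ := volume)
      (f := fun x : ℝ => 1 / x - (⌊1 / x⌋ : ℝ))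
      (fun _ => measurableSet_Ioc) hd hfi
    rw [← gauss_Ioc_union] at hsum
    have hterm : ∀ n : ℕ,
        (∫ x in Set.Ioc (1 / ((n : ℝ) + 2)) (1 / ((n : ℝ) + 1)), (1 / x - (⌊1 / x⌋ : ℝ))) =
          Real.log ((n : ℝ) + 2) - Real.log ((n : ℝ) + 1) - 1 / ((n : ℝ) + 2) := by
      intro n
      rw [integral_Ioc_eq_integral_Ioo]
      have := gauss_piece (n + 1) (Nat.succ_pos n)
      push_cast at this
      rw [show ((n : ℝ) + 1 + 1) = (n : ℝ) + 2 by ring] at this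
      exact this
    have hIoo : (∫ x in Set.Ioo (0 : ℝ) 1, (1 / x - (⌊1 / x⌋ : ℝ))) =
        ∫ x in Set.Ioc (0 : ℝ) 1, (1 / x - (⌊1 / x⌋ : ℝ)) :=
      (integral_Ioc_eq_integral_Ioo).symm
    rw [hIoo]
    -- partial sums
    have htend := hsum.tendsto_sum_nat
    have hpartial : ∀ N : ℕ,
        (∑ n ∈ Finset.range N,
          ∫ x in Set.Ioc (1 / ((n : ℝ) + 2)) (1 / ((n : ℝ) + 1)), (1 / x - (⌊1 / x⌋ : ℝ)))
        = 1 - Real.eulerMascheroniSeq' (N + 1) := by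
      intro N
      have e1 : (∑ n ∈ Finset.range N,
          ∫ x in Set.Ioc (1 / ((n : ℝ) + 2)) (1 / ((n : ℝ) + 1)), (1 / x - (⌊1 / x⌋ : ℝ)))
          = ∑ n ∈ Finset.range N,
            (Real.log ((n : ℝ) + 2) - Real.log ((n : ℝ) + 1) - 1 / ((n : ℝ) + 2)) := by
        apply Finset.sum_congr rfl
        intro n _
        exact hterm n
      rw [e1]
      rw [Finset.sum_sub_distrib]
      have e2 : (∑ n ∈ Finset.range N, (Real.log ((n : ℝ) + 2) - Real.log ((n : ℝ) + 1)))
          = Real.log ((N : ℝ) + 1) := by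
        have := Finset.sum_range_sub (fun k : ℕ => Real.log ((k : ℝ) + 1)) N
        simp only [Nat.cast_add, Nat.cast_one] at this
        rw [show (∑ n ∈ Finset.range N, (Real.log ((n : ℝ) + 2) - Real.log ((n : ℝ) + 1)))
            = ∑ i ∈ Finset.range N, (Real.log ((i : ℝ) + 1 + 1) - Real.log ((i : ℝ) + 1)) by
          apply Finset.sum_congr rfl; intro i _; ring_nf]
        rw [this]
        simp
      have e3 : (∑ n ∈ Finset.range N, (1 : ℝ) / ((n : ℝ) + 2))
          = (harmonic (N + 1) : ℝ) - 1 := by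
        have : (harmonic (N + 1) : ℝ) = ∑ i ∈ Finset.range (N + 1), ((i : ℝ) + 1)⁻¹ := by
          rw [harmonic]
          push_cast
          rfl
        rw [this, Finset.sum_range_succ' (fun i : ℕ => ((i : ℝ) + 1)⁻¹) N]
        push_cast
        rw [show ((0 : ℝ) + 1)⁻¹ = 1 by norm_num]
        rw [show (∑ n ∈ Finset.range N, (1 : ℝ) / ((n : ℝ) + 2))
            = ∑ i ∈ Finset.range N, ((i : ℝ) + 1 + 1)⁻¹ by
          apply Finset.sum_congr rfl; intro i _; rw [one_div]; ring_nf]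
        ring
      rw [e2, e3]
      rw [Real.eulerMascheroniSeq', if_neg (Nat.succ_ne_zero N)]
      push_cast
      ring
    have htend2 : Filter.Tendsto
        (fun N : ℕ => (1 : ℝ) - Real.eulerMascheroniSeq' (N + 1)) Filter.atTop
        (nhds (1 - Real.eulerMascheroniConstant)) := by
      apply Filter.Tendsto.const_sub
      exact Real.tendsto_eulerMascheroniSeq'.comp (Filter.tendsto_add_atTop_nat 1)
    have htend3 : Filter.Tendsto
        (fun N : ℕ => ∑ n ∈ Finset.range N,
          ∫ x in Set.Ioc (1 / ((n : ℝ) + 2)) (1 / ((n : ℝ) + 1)), (1 / x - (⌊1 / x⌋ : ℝ)))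
        Filter.atTop (nhds (1 - Real.eulerMascheroniConstant)) := by
      apply htend2.congr
      intro N
      exact (hpartial N).symm
    exact tendsto_nhds_unique htend htend3
end

section
/- ζ(3) = Σ_{m=0}^∞ ψ'(m+2)/(m+1), where ψ' is the trigamma function. -/
/-!
Consider Tornheim's double series `T = ∑_{m,k ≥ 0} 1 / ((m+1) (m+k+2)²)`. Summing over `k` first
gives the right-hand side `∑ ψ'(m+2)/(m+1)`. Summing over `m` first gives, by partial fractions
in `m`, `∑ (H_{k+1}/(k+1)² - ψ'(k+2)/(k+1))`, and grouping along the antidiagonals `m + k = n`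
gives `∑ H_{n+1}/(n+2)² = ∑ H_n/(n+1)²`. Adding the first two and subtracting the third leaves
`∑ (H_{n+1} - H_n)/(n+1)² = ζ(3)`, with sum `T + T - T = T`.
-/

open scoped BigOperators

noncomputable def trigamma (x : ℝ) : ℝ := ∑' k : ℕ, 1 / ((k : ℝ) + x) ^ 2

open Filter Finset

theorem hasSum_one_div_add_sub_one_div_add_one {x : ℝ} (hx : 0 < x) :
    HasSum (fun k : ℕ => 1 / ((k : ℝ) + x) - 1 / ((k : ℝ) + x + 1)) (1 / x) := by
  have hnonneg (k : ℕ) : 0 ≤ 1 / ((k : ℝ) + x) - 1 / ((k : ℝ) + x + 1) :=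
    sub_nonneg.2 <| one_div_le_one_div_of_le (by positivity) (by linarith)
  have hpartial (n : ℕ) : ∑ k ∈ range n, (1 / ((k : ℝ) + x) - 1 / ((k : ℝ) + x + 1))
      = 1 / x - 1 / ((n : ℝ) + x) := by
    simpa [add_right_comm _ (1 : ℝ) x] using sum_range_sub' (fun k : ℕ => 1 / ((k : ℝ) + x)) n
  have hlim : Tendsto (fun n : ℕ => 1 / ((n : ℝ) + x)) atTop (nhds 0) := by
    simpa [Pi.inv_def] using
      (tendsto_atTop_add_const_right _ x tendsto_natCast_atTop_atTop).inv_tendsto_atTop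
  rw [hasSum_iff_tendsto_nat_of_nonneg hnonneg]
  simp only [hpartial]
  simpa using tendsto_const_nhds.sub hlim

theorem hasSum_one_div_add_one_sub_one_div_add (a : ℕ) :
    HasSum (fun k : ℕ => 1 / ((k : ℝ) + 1) - 1 / ((k : ℝ) + a + 1)) (harmonic a) := by
  induction a with
  | zero => simp [hasSum_zero]
  | succ a ih =>
    have hstep := hasSum_one_div_add_sub_one_div_add_one (x := (a : ℝ) + 1) (by positivity)
    convert ih.add hstep using 1
    · ext k
      push_cast
      ring_nf
    · push_cast [harmonic_succ]
      ring

theorem summable_one_div_add_sq (x : ℝ) : Summable (fun k : ℕ => 1 / ((k : ℝ) + x) ^ 2) := by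
  simpa using (Real.summable_one_div_nat_add_rpow x 2).2 one_lt_two

theorem hasSum_trigamma (x : ℝ) : HasSum (fun k : ℕ => 1 / ((k : ℝ) + x) ^ 2) (trigamma x) :=
  (summable_one_div_add_sq x).hasSum

theorem trigamma_add_one_le {x : ℝ} (hx : 0 < x) : trigamma (x + 1) ≤ 1 / x := by
  refine hasSum_le (fun k => ?_) (hasSum_trigamma (x + 1))
    (hasSum_one_div_add_sub_one_div_add_one hx)
  have hk : 0 < (k : ℝ) + x := by positivity
  calc 1 / ((k : ℝ) + (x + 1)) ^ 2 ≤ 1 / (((k : ℝ) + x) * ((k : ℝ) + x + 1)) :=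
        one_div_le_one_div_of_le (by positivity) (by nlinarith)
    _ = 1 / ((k : ℝ) + x) - 1 / ((k : ℝ) + x + 1) := by field_simp; ring

theorem HasSum.sum_antidiagonal {A α : Type*} [AddMonoid A] [HasAntidiagonal A]
    [AddCommMonoid α] [TopologicalSpace α] [ContinuousAdd α] [RegularSpace α]
    {f : A × A → α} {a : α} (hf : HasSum f a) : HasSum (fun n => ∑ p ∈ antidiagonal n, f p) a :=
  (HasAntidiagonal.sigmaAntidiagonalEquivProd.hasSum_iff.2 hf).sigma fun n =>
    (antidiagonal n).hasSum f

noncomputable def tornheimTerm (p : ℕ × ℕ) : ℝ :=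
  1 / (((p.1 : ℝ) + 1) * ((p.1 : ℝ) + p.2 + 2) ^ 2)

theorem tornheimTerm_nonneg : 0 ≤ tornheimTerm := fun p => by
  unfold tornheimTerm; positivity

theorem hasSum_tornheimTerm_row (m : ℕ) :
    HasSum (fun k => tornheimTerm (m, k)) (trigamma ((m : ℝ) + 2) / ((m : ℝ) + 1)) := by
  refine ((hasSum_trigamma ((m : ℝ) + 2)).div_const ((m : ℝ) + 1)).congr_fun fun k => ?_
  simp only [tornheimTerm]
  field_simp
  ring

theorem hasSum_tornheimTerm_col (k : ℕ) :
    HasSum (fun m => tornheimTerm (m, k))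
      (harmonic (k + 1) / ((k : ℝ) + 1) ^ 2 - trigamma ((k : ℝ) + 2) / ((k : ℝ) + 1)) := by
  refine (((hasSum_one_div_add_one_sub_one_div_add (k + 1)).div_const (((k : ℝ) + 1) ^ 2)).sub
    ((hasSum_trigamma ((k : ℝ) + 2)).div_const ((k : ℝ) + 1))).congr_fun fun m => ?_
  simp only [tornheimTerm]
  push_cast
  field_simp
  ring

theorem summable_tornheimTerm : Summable tornheimTerm := by
  refine (summable_prod_of_nonneg tornheimTerm_nonneg).2
    ⟨fun m => (hasSum_tornheimTerm_row m).summable, ?_⟩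
  refine .of_nonneg_of_le (fun m => tsum_nonneg fun k => tornheimTerm_nonneg _) (fun m => ?_)
    ((summable_nat_add_iff 1).2 (Real.summable_one_div_nat_pow.2 one_lt_two))
  rw [(hasSum_tornheimTerm_row m).tsum_eq]
  have hm : (0 : ℝ) < m + 1 := by positivity
  calc trigamma ((m : ℝ) + 2) / ((m : ℝ) + 1) ≤ 1 / ((m : ℝ) + 1) / ((m : ℝ) + 1) := by
        gcongr
        simpa [add_assoc, one_add_one_eq_two] using trigamma_add_one_le hm
    _ = 1 / ((m + 1 : ℕ) : ℝ) ^ 2 := by push_cast; rw [div_div, sq]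

theorem sum_antidiagonal_tornheimTerm (n : ℕ) :
    ∑ p ∈ antidiagonal n, tornheimTerm p = harmonic (n + 1) / ((n : ℝ) + 2) ^ 2 := by
  have hterm : ∀ p ∈ antidiagonal n,
      tornheimTerm p = 1 / ((p.1 : ℝ) + 1) / ((n : ℝ) + 2) ^ 2 := by
    intro p hp
    rw [HasAntidiagonal.mem_antidiagonal] at hp
    rw [tornheimTerm, div_div, ← hp]
    push_cast
    ring
  rw [sum_congr rfl hterm, ← sum_div, Nat.sum_antidiagonal_eq_sum_range_succ_mk, harmonic]
  push_cast
  simp [one_div]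

/-- `ζ(3) = Σ_{m=0}^∞ ψ'(m+2)/(m+1)`. -/
theorem zeta_three_eq_trigamma_sum :
    (∑' n : ℕ, 1 / ((n : ℝ) + 1) ^ 3) = ∑' m : ℕ, trigamma ((m : ℝ) + 2) / ((m : ℝ) + 1) := by
  obtain ⟨T, hT⟩ := summable_tornheimTerm
  have hRows := hT.prod_fiberwise hasSum_tornheimTerm_row
  have hCols := ((Equiv.prodComm ℕ ℕ).hasSum_iff.2 hT).prod_fiberwise hasSum_tornheimTerm_col
  have hDiagonals : HasSum (fun n : ℕ => (harmonic n : ℝ) / ((n : ℝ) + 1) ^ 2) T := by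
    rw [← hasSum_nat_add_iff' 1]
    simpa [sum_antidiagonal_tornheimTerm, add_assoc, one_add_one_eq_two] using hT.sum_antidiagonal
  have hZeta : HasSum (fun n : ℕ => 1 / ((n : ℝ) + 1) ^ 3) T := by
    have h := (hRows.add hCols).sub hDiagonals
    rw [add_sub_cancel_right] at h
    refine h.congr_fun fun n => ?_
    push_cast [harmonic_succ]
    field_simp
    ring
  rw [hZeta.tsum_eq, hRows.tsum_eq]
end
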